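/- (Lemma 3.2, effective Hamiltonian.) Assume ν_1, ν_2 ≥ k > 0, (H2) and (H3) for I = 2. Suppose σ_n → 0, (n_1^{σ_n}, n_2^{σ_n}) is a solution of (FP'_{σ_n}) for each n, and R : [0,1] → ℝ is continuous and such that R_i^{σ_n} := −σ_n ln n_i^{σ_n} converges uniformly on [0,1] to R for i = 1,2. Define, for p ∈ ℝ and x ∈ [0,1], β_i(p,x) := p² − ψ_i'(x) p − ν_i (i = 1,2) and H(p,x) := (1/2)[β_1 + β_2 + √((β_1+β_2)² − 4(β_1 β_2 − ν_1 ν_2))]. Then R is a viscosity solution of H(R', x) = 0 in (0,1); explicitly: for every C¹ function Φ : (0,1) → ℝ and every local maximum point x₀ ∈ (0,1) of R − Φ one has H(Φ'(x₀), x₀) ≤ 0, and for every local minimum point x₀ ∈ (0,1) of R − Φ one has H(Φ'(x₀), x₀) ≥ 0. -/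

import Mathlib

open Real Set MeasureTheory Filter

/-- A solution of the Fokker–Planck system (FP'_σ) with large transition
coefficients `ν₁/σ`, `ν₂/σ`: `n₁, n₂` are C², strictly positive on `[0,1]`,
satisfy the system in `(0,1)` and the zero-flux boundary conditions. -/
def IsFPSolution2 (ψ₁ ψ₂ : ℝ → ℝ) (ν₁ ν₂ : ℝ) (σ : ℝ) (n₁ n₂ : ℝ → ℝ) : Prop :=
  ContDiff ℝ 2 n₁ ∧ ContDiff ℝ 2 n₂ ∧
  (∀ x ∈ Set.Icc (0:ℝ) 1, 0 < n₁ x ∧ 0 < n₂ x) ∧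
  (∀ x ∈ Set.Ioo (0:ℝ) 1,
    -σ * deriv (deriv n₁) x - deriv (fun y => deriv ψ₁ y * n₁ y) x
      + (ν₁ / σ) * n₁ x = (ν₂ / σ) * n₂ x) ∧
  (∀ x ∈ Set.Ioo (0:ℝ) 1,
    -σ * deriv (deriv n₂) x - deriv (fun y => deriv ψ₂ y * n₂ y) x
      + (ν₂ / σ) * n₂ x = (ν₁ / σ) * n₁ x) ∧
  (∀ x ∈ ({0, 1} : Set ℝ),
    σ * deriv n₁ x + deriv ψ₁ x * n₁ x = 0 ∧
    σ * deriv n₂ x + deriv ψ₂ x * n₂ x = 0)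

/-!
Perturbed test functions. A C¹ test function `Φ` is replaced by C² averages `ζ` of `Φ` over
windows of width `2σ`, penalized by `±(x - x₀)²`, so that `-σ log nᵢ - ζ` attains its
extremum over a small window at points `Xᵢ → x₀`. In the phase `uᵢ = -σ log nᵢ` the equation
for `nᵢ` reads `νⱼ nⱼ / nᵢ = σ uᵢ'' - σ ψᵢ'' - βᵢ(uᵢ')`, so at a maximum the second-order
condition gives `ν₂ n₂/n₁ (X₁) ≤ -β₁ + o(1)` and `ν₁ n₁/n₂ (X₂) ≤ -β₂ + o(1)`, while adding
the two maximality conditions shows that the product of these ratios is at least `ν₁ ν₂`.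
In the limit `β₁, β₂ ≤ 0` and `ν₁ ν₂ ≤ β₁ β₂`: both eigenvalues of `[[β₁, ν₂], [ν₁, β₂]]`,
the larger of which is `H`, are nonpositive. At a minimum all inequalities reverse and give
`max(-β₁, 0) max(-β₂, 0) ≤ ν₁ ν₂`, which forces `H ≥ 0`.
-/

open Topology

theorem IsLocalMax.hasDerivAt_deriv_nonpos {f f' : ℝ → ℝ} {f'' a : ℝ} (h : IsLocalMax f a)
    (hf : ∀ᶠ x in 𝓝 a, HasDerivAt f (f' x) x) (hf' : HasDerivAt f' f'' a) : f'' ≤ 0 := by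
  have hd : deriv f =ᶠ[𝓝 a] f' := hf.mono fun x hx => hx.deriv
  have hdd : deriv (deriv f) a = f'' := by
    rw [hd.deriv_eq]
    exact hf'.deriv
  by_contra! hpos
  have hmin := isLocalMin_of_deriv_deriv_pos (hdd ▸ hpos) h.deriv_eq_zero
    hf.self_of_nhds.continuousAt
  have hconst : f =ᶠ[𝓝 a] fun _ => f a :=
    (h.and hmin).mono fun _ hx => le_antisymm hx.1 hx.2
  have : deriv (deriv f) a = 0 := by
    rw [hconst.deriv.deriv_eq]
    simp
  linarith

theorem IsLocalMin.hasDerivAt_deriv_nonneg {f f' : ℝ → ℝ} {f'' a : ℝ} (h : IsLocalMin f a)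
    (hf : ∀ᶠ x in 𝓝 a, HasDerivAt f (f' x) x) (hf' : HasDerivAt f' f'' a) : 0 ≤ f'' := by
  simpa using h.neg.hasDerivAt_deriv_nonpos (hf.mono fun x hx => hx.neg) hf'.neg

section IntervalAverage

variable {f : ℝ → ℝ} {δ : ℝ}

theorem exists_abs_sub_lt_eq_intervalAverage (hf : Continuous f) (hδ : 0 < δ) (x : ℝ) :
    ∃ c, |c - x| < δ ∧ f c = ⨍ t in (x - δ)..(x + δ), f t := by
  obtain ⟨c, hc, hfc⟩ := exists_eq_interval_average (by linarith : x - δ ≠ x + δ)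
    hf.continuousOn
  rw [uIoo_of_le (by linarith)] at hc
  exact ⟨c, abs_sub_lt_iff.mpr ⟨by linarith [hc.2], by linarith [hc.1]⟩, hfc⟩

theorem hasDerivAt_intervalAverage (hf : Continuous f) (x : ℝ) :
    HasDerivAt (fun y => ⨍ t in (y - δ)..(y + δ), f t)
      ((f (x + δ) - f (x - δ)) / (2 * δ)) x := by
  have hG : ∀ y, HasDerivAt (fun u => ∫ t in (0 : ℝ)..u, f t) (f y) y := fun y =>
    (hf.integral_hasStrictDerivAt 0 y).hasDerivAt
  have hav : (fun y => ⨍ t in (y - δ)..(y + δ), f t)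
      = fun y => ((∫ t in (0 : ℝ)..(y + δ), f t) - ∫ t in (0 : ℝ)..(y - δ), f t) / (2 * δ) := by
    funext y
    rw [interval_average_eq_div, intervalIntegral.integral_interval_sub_left
      (hf.intervalIntegrable _ _) (hf.intervalIntegrable _ _)]
    ring_nf
  rw [hav]
  exact (((hG (x + δ)).comp_add_const x δ).sub ((hG (x - δ)).comp_sub_const x δ)).div_const _

theorem tendsto_intervalAverage (hf : Continuous f) {δ X : ℕ → ℝ} {x₀ : ℝ}
    (hδ : ∀ m, 0 < δ m) (hδ0 : Tendsto δ atTop (𝓝 0)) (hX : Tendsto X atTop (𝓝 x₀)) :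
    Tendsto (fun m => ⨍ t in (X m - δ m)..(X m + δ m), f t) atTop (𝓝 (f x₀)) := by
  choose c hc hfc using fun m => exists_abs_sub_lt_eq_intervalAverage hf (hδ m) (X m)
  have hcX : Tendsto (fun m => c m - X m) atTop (𝓝 0) :=
    squeeze_zero_norm (fun m => (hc m).le) (by simpa [abs_of_pos (hδ _)] using hδ0)
  have := (hf.tendsto x₀).comp (by simpa using hcX.add hX)
  simpa [Function.comp_def, hfc] using this

theorem tendstoUniformly_intervalAverage (hf : UniformContinuous f) {δ : ℕ → ℝ}
    (hδ : ∀ m, 0 < δ m) (hδ0 : Tendsto δ atTop (𝓝 0)) :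
    TendstoUniformly (fun m x => ⨍ t in (x - δ m)..(x + δ m), f t) f atTop := by
  rw [Metric.tendstoUniformly_iff]
  intro ε hε
  obtain ⟨ρ, hρ, hfρ⟩ := Metric.uniformContinuous_iff.mp hf ε hε
  filter_upwards [hδ0.eventually (gt_mem_nhds hρ)] with m hm x
  obtain ⟨c, hc, hfc⟩ := exists_abs_sub_lt_eq_intervalAverage hf.continuous (hδ m) x
  rw [← hfc, dist_comm]
  exact hfρ (by rw [Real.dist_eq]; linarith)

end IntervalAverage

/-- C² stand-ins for a C¹ test function `Z` with slope `p` at `x₀`, fit for a vanishing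
viscosity limit with viscosity `σ`. -/
structure IsTestSeq (σ : ℕ → ℝ) (s : Set ℝ) (Z : ℝ → ℝ) (x₀ p : ℝ) (ζ ζ' ζ'' : ℕ → ℝ → ℝ) :
    Prop where
  tendstoUniformlyOn : TendstoUniformlyOn ζ Z atTop s
  hasDerivAt : ∀ m x, HasDerivAt (ζ m) (ζ' m x) x
  hasDerivAt_deriv : ∀ m x, HasDerivAt (ζ' m) (ζ'' m x) x
  tendsto_deriv : ∀ X : ℕ → ℝ, Tendsto X atTop (𝓝 x₀) →
    Tendsto (fun m => ζ' m (X m)) atTop (𝓝 p)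
  tendsto_mul_deriv2 : ∀ X : ℕ → ℝ, Tendsto X atTop (𝓝 x₀) →
    Tendsto (fun m => σ m * ζ'' m (X m)) atTop (𝓝 0)

namespace IsTestSeq

variable {σ : ℕ → ℝ} {s : Set ℝ} {Z : ℝ → ℝ} {x₀ p : ℝ} {ζ ζ' ζ'' : ℕ → ℝ → ℝ}

theorem add_sq (h : IsTestSeq σ s Z x₀ p ζ ζ' ζ'') (hσ0 : Tendsto σ atTop (𝓝 0)) (c : ℝ) :
    IsTestSeq σ s (fun x => Z x + c * (x - x₀) ^ 2) x₀ p (fun m x => ζ m x + c * (x - x₀) ^ 2)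
      (fun m x => ζ' m x + 2 * c * (x - x₀)) (fun m x => ζ'' m x + 2 * c) where
  tendstoUniformlyOn := Metric.tendstoUniformlyOn_iff.2 fun ε hε =>
    (Metric.tendstoUniformlyOn_iff.1 h.tendstoUniformlyOn ε hε).mono fun _ hm x hx => by
      simpa using hm x hx
  hasDerivAt m x := (h.hasDerivAt m x).add <|
    ((((hasDerivAt_id' x).sub_const x₀).fun_pow 2).const_mul c).congr_deriv (by norm_num; ring)
  hasDerivAt_deriv m x := (h.hasDerivAt_deriv m x).add <| by
    simpa using ((hasDerivAt_id x).sub_const x₀).const_mul (2 * c)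
  tendsto_deriv X hX := by
    simpa using (h.tendsto_deriv X hX).add ((hX.sub_const x₀).const_mul (2 * c))
  tendsto_mul_deriv2 X hX := by
    simpa [mul_add] using (h.tendsto_mul_deriv2 X hX).add (hσ0.mul_const (2 * c))

theorem continuous (h : IsTestSeq σ s Z x₀ p ζ ζ' ζ'') (m : ℕ) : Continuous (ζ m) :=
  continuous_iff_continuousAt.2 fun x => (h.hasDerivAt m x).continuousAt

end IsTestSeq

/-- The test sequence averages, over windows of width `2σ`, an antiderivative of `Φ'`
extended continuously and boundedly off `[c, d]`. -/
theorem exists_isTestSeq {Φ Φ' : ℝ → ℝ} {c d x₀ : ℝ} (hcd : c ≤ d) (hx₀ : x₀ ∈ Icc c d)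
    (hΦ : ∀ x ∈ Icc c d, HasDerivAt Φ (Φ' x) x) (hΦ' : ContinuousOn Φ' (Icc c d))
    {σ : ℕ → ℝ} (hσ : ∀ m, 0 < σ m) (hσ0 : Tendsto σ atTop (𝓝 0)) :
    ∃ ζ ζ' ζ'', IsTestSeq σ (Icc c d) Φ x₀ (Φ' x₀) ζ ζ' ζ'' := by
  set g : ℝ → ℝ := IccExtend hcd ((Icc c d).domRestrict Φ')
  have hg : Continuous g := (continuousOn_iff_continuous_domRestrict.mp hΦ').Icc_extend'
  have hgΦ' : ∀ x ∈ Icc c d, g x = Φ' x := fun x hx => IccExtend_of_mem hcd _ hx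
  obtain ⟨C, hC⟩ := isCompact_Icc.exists_bound_of_continuousOn hΦ'
  set F : ℝ → ℝ := fun x => Φ c + ∫ t in c..x, g t
  have hF : ∀ x, HasDerivAt F (g x) x := fun x =>
    (hg.integral_hasStrictDerivAt c x).hasDerivAt.const_add _
  have hFΦ : EqOn F Φ (Icc c d) := by
    intro x hx
    have hsub : uIcc c x ⊆ Icc c d := uIcc_subset_Icc (left_mem_Icc.2 hcd) hx
    simp only [F]
    rw [intervalIntegral.integral_congr fun t ht => hgΦ' t (hsub ht),
      intervalIntegral.integral_eq_sub_of_hasDerivAt (fun t ht => hΦ t (hsub ht))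
        ((hΦ'.mono hsub).intervalIntegrable)]
    ring
  have hFlip : LipschitzWith C.toNNReal F := by
    refine lipschitzWith_of_nnnorm_deriv_le (fun x => (hF x).differentiableAt) fun x => ?_
    rw [(hF x).deriv, ← NNReal.coe_le_coe, coe_nnnorm]
    exact (hC _ (projIcc c d hcd x).2).trans (Real.le_coe_toNNReal C)
  have hslope : ∀ m x, (F (x + σ m) - F (x - σ m)) / (2 * σ m)
      = ⨍ t in (x - σ m)..(x + σ m), g t := fun m x => by
    rw [interval_average_eq_div, intervalIntegral.integral_eq_sub_of_hasDerivAt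
      (fun t _ => hF t) (hg.intervalIntegrable _ _)]
    ring_nf
  refine ⟨fun m x => ⨍ t in (x - σ m)..(x + σ m), F t,
    fun m x => ⨍ t in (x - σ m)..(x + σ m), g t,
    fun m x => (g (x + σ m) - g (x - σ m)) / (2 * σ m), ⟨?_, ?_, ?_, ?_, ?_⟩⟩
  · exact (tendstoUniformly_intervalAverage hFlip.uniformContinuous hσ hσ0).tendstoUniformlyOn
      |>.congr_right hFΦ
  · intro m x
    rw [← hslope]
    exact hasDerivAt_intervalAverage hFlip.continuous x
  · intro m x
    exact hasDerivAt_intervalAverage hg x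
  · intro X hX
    rw [← hgΦ' x₀ hx₀]
    exact tendsto_intervalAverage hg hσ hσ0 hX
  · intro X hX
    have hright := (hg.tendsto x₀).comp (by simpa using hX.add hσ0)
    have hleft := (hg.tendsto x₀).comp (by simpa using hX.sub hσ0)
    refine ((hright.sub hleft).div_const 2).congr' ?_ |>.trans (by simp)
    filter_upwards with m
    simp only [Function.comp_apply]
    field_simp [(hσ m).ne']

theorem exists_nhds_isTestSeq {Φ : ℝ → ℝ} {x₀ : ℝ} {P : ℝ → Prop} (hP : ∀ᶠ x in 𝓝 x₀, P x)
    (hx₀ : x₀ ∈ Ioo (0 : ℝ) 1) (hΦ : ∀ x ∈ Ioo (0 : ℝ) 1, DifferentiableAt ℝ Φ x)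
    (hΦ' : ContinuousOn (deriv Φ) (Ioo 0 1)) {σ : ℕ → ℝ} (hσ : ∀ m, 0 < σ m)
    (hσ0 : Tendsto σ atTop (𝓝 0)) :
    ∃ s : Set ℝ, IsCompact s ∧ s ∈ 𝓝 x₀ ∧ s ⊆ Ioo 0 1 ∧ (∀ x ∈ s, P x) ∧
      ∃ ζ ζ' ζ'', IsTestSeq σ s Φ x₀ (deriv Φ x₀) ζ ζ' ζ'' := by
  obtain ⟨r, hr, hrP⟩ :=
    (nhds_basis_Icc_pos x₀).eventually_iff.mp (hP.and (Ioo_mem_nhds hx₀.1 hx₀.2))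
  have hs01 : Icc (x₀ - r) (x₀ + r) ⊆ Ioo 0 1 := fun x hx => (hrP hx).2
  refine ⟨_, isCompact_Icc, Icc_mem_nhds (by linarith) (by linarith), hs01,
    fun x hx => (hrP hx).1, exists_isTestSeq (by linarith) ⟨by linarith, by linarith⟩
      (fun x hx => (hΦ x (hs01 hx)).hasDerivAt) (hΦ'.mono hs01) hσ hσ0⟩

theorem exists_isMaxOn_tendsto {α : Type*} [PseudoMetricSpace α] {s : Set α} {x₀ : α}
    (hs : IsCompact s) (hx₀ : x₀ ∈ s) {v : ℕ → α → ℝ} {V : α → ℝ}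
    (hv : ∀ m, ContinuousOn (v m) s) (hvV : TendstoUniformlyOn v V atTop s)
    (hV : ∀ z ∈ s, V z + dist z x₀ ^ 2 ≤ V x₀) :
    ∃ X : ℕ → α, (∀ m, X m ∈ s ∧ IsMaxOn (v m) s (X m)) ∧ Tendsto X atTop (𝓝 x₀) := by
  choose X hXs hXmax using fun m => hs.exists_isMaxOn ⟨x₀, hx₀⟩ (hv m)
  refine ⟨X, fun m => ⟨hXs m, hXmax m⟩, Metric.tendsto_atTop.2 fun ε hε => ?_⟩
  obtain ⟨N, hN⟩ := eventually_atTop.mp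
    (Metric.tendstoUniformlyOn_iff.mp hvV (ε ^ 2 / 2) (by positivity))
  refine ⟨N, fun m hm => lt_of_pow_lt_pow_left₀ 2 hε.le ?_⟩
  have h₀ := hN m hm x₀ hx₀
  have h₁ := hN m hm (X m) (hXs m)
  rw [Real.dist_eq, abs_lt] at h₀ h₁
  linarith [isMaxOn_iff.mp (hXmax m) x₀ hx₀, hV (X m) (hXs m)]

/-- The paper's `βᵢ(p, x)`. -/
noncomputable def fpBeta (ψ : ℝ → ℝ) (ν p x : ℝ) : ℝ := p ^ 2 - deriv ψ x * p - ν

section Pointwise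

variable {ψ n nb ζ ζ' ζ'' : ℝ → ℝ} {σ ν μ y : ℝ}

theorem exists_hasDerivAt_phase_eq_residual (hσ : σ ≠ 0) (hψ : ContDiff ℝ 2 ψ)
    (hn : ContDiff ℝ 2 n) (hny : 0 < n y)
    (heq : -σ * deriv (deriv n) y - deriv (fun x => deriv ψ x * n x) y + ν / σ * n y
      = μ / σ * nb y) :
    ∃ (u' : ℝ → ℝ) (u'' : ℝ), (∀ᶠ x in 𝓝 y, HasDerivAt (fun x => -σ * log (n x)) (u' x) x) ∧
      HasDerivAt u' u'' y ∧
      μ * nb y / n y = σ * u'' - σ * deriv (deriv ψ) y - fpBeta ψ ν (u' y) y := by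
  have hn' : ∀ x, HasDerivAt n (deriv n x) x := fun x =>
    (hn.differentiable (by norm_num) x).hasDerivAt
  have hn'' : HasDerivAt (deriv n) (deriv (deriv n) y) y :=
    ((hn.iterate_deriv' 1 1).differentiable one_ne_zero y).hasDerivAt
  have hψ'' : HasDerivAt (deriv ψ) (deriv (deriv ψ) y) y :=
    ((hψ.iterate_deriv' 1 1).differentiable one_ne_zero y).hasDerivAt
  refine ⟨fun x => -σ * (deriv n x / n x),
    -σ * ((deriv (deriv n) y * n y - deriv n y * deriv n y) / n y ^ 2), ?_,
    (hn''.div (hn' y) hny.ne').const_mul (-σ), ?_⟩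
  · filter_upwards [hn.continuous.continuousAt.eventually (lt_mem_nhds hny)] with x hx
    exact ((hn' x).log hx.ne').const_mul (-σ)
  · rw [(hψ''.fun_mul (hn' y)).deriv] at heq
    unfold fpBeta
    field_simp at heq ⊢
    linear_combination (-(n y)) * heq

theorem ratio_le_of_isLocalMax_phase_sub (hσ : 0 < σ) (hψ : ContDiff ℝ 2 ψ)
    (hn : ContDiff ℝ 2 n) (hny : 0 < n y)
    (heq : -σ * deriv (deriv n) y - deriv (fun x => deriv ψ x * n x) y + ν / σ * n y
      = μ / σ * nb y)
    (hζ : ∀ x, HasDerivAt ζ (ζ' x) x) (hζ' : ∀ x, HasDerivAt ζ' (ζ'' x) x)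
    (hmax : IsLocalMax (fun x => -σ * log (n x) - ζ x) y) :
    μ * nb y / n y ≤ σ * ζ'' y - σ * deriv (deriv ψ) y - fpBeta ψ ν (ζ' y) y := by
  obtain ⟨u', u'', hu, hu', hphase⟩ := exists_hasDerivAt_phase_eq_residual hσ.ne' hψ hn hny heq
  have hd : ∀ᶠ x in 𝓝 y, HasDerivAt (fun x => -σ * log (n x) - ζ x) (u' x - ζ' x) x :=
    hu.mono fun x hx => hx.sub (hζ x)
  have h₁ : u' y = ζ' y := sub_eq_zero.mp (hmax.hasDerivAt_eq_zero hd.self_of_nhds)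
  have h₂ : u'' ≤ ζ'' y := sub_nonpos.mp (hmax.hasDerivAt_deriv_nonpos hd (hu'.sub (hζ' y)))
  rw [hphase, h₁]
  linarith [mul_le_mul_of_nonneg_left h₂ hσ.le]

theorem le_ratio_of_isLocalMin_phase_sub (hσ : 0 < σ) (hψ : ContDiff ℝ 2 ψ)
    (hn : ContDiff ℝ 2 n) (hny : 0 < n y)
    (heq : -σ * deriv (deriv n) y - deriv (fun x => deriv ψ x * n x) y + ν / σ * n y
      = μ / σ * nb y)
    (hζ : ∀ x, HasDerivAt ζ (ζ' x) x) (hζ' : ∀ x, HasDerivAt ζ' (ζ'' x) x)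
    (hmin : IsLocalMin (fun x => -σ * log (n x) - ζ x) y) :
    σ * ζ'' y - σ * deriv (deriv ψ) y - fpBeta ψ ν (ζ' y) y ≤ μ * nb y / n y := by
  obtain ⟨u', u'', hu, hu', hphase⟩ := exists_hasDerivAt_phase_eq_residual hσ.ne' hψ hn hny heq
  have hd : ∀ᶠ x in 𝓝 y, HasDerivAt (fun x => -σ * log (n x) - ζ x) (u' x - ζ' x) x :=
    hu.mono fun x hx => hx.sub (hζ x)
  have h₁ : u' y = ζ' y := sub_eq_zero.mp (hmin.hasDerivAt_eq_zero hd.self_of_nhds)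
  have h₂ : ζ'' y ≤ u'' := sub_nonneg.mp (hmin.hasDerivAt_deriv_nonneg hd (hu'.sub (hζ' y)))
  rw [hphase, h₁]
  linarith [mul_le_mul_of_nonneg_left h₂ hσ.le]

end Pointwise

section Touching

variable {ψ : ℝ → ℝ} {ν μ : ℝ} {σ : ℕ → ℝ} {n nb : ℕ → ℝ → ℝ} {R Z : ℝ → ℝ} {s : Set ℝ}
  {x₀ p : ℝ} {ζ ζ' ζ'' : ℕ → ℝ → ℝ}

theorem IsTestSeq.tendsto_residual (h : IsTestSeq σ s Z x₀ p ζ ζ' ζ'')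
    (hσ0 : Tendsto σ atTop (𝓝 0)) (hψ : ContDiff ℝ 2 ψ) {X : ℕ → ℝ}
    (hX : Tendsto X atTop (𝓝 x₀)) :
    Tendsto (fun m => σ m * ζ'' m (X m) - σ m * deriv (deriv ψ) (X m)
      - fpBeta ψ ν (ζ' m (X m)) (X m)) atTop (𝓝 (-fpBeta ψ ν p x₀)) := by
  have hψ' := ((hψ.continuous_deriv (by norm_num)).tendsto x₀).comp hX
  have hψ'' := (((hψ.iterate_deriv' 0 2).continuous).tendsto x₀).comp hX
  have hp := h.tendsto_deriv X hX
  have := ((h.tendsto_mul_deriv2 X hX).sub (hσ0.mul hψ'')).sub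
    (((hp.pow 2).sub (hψ'.mul hp)).sub_const ν)
  simpa [fpBeta] using this

theorem exists_isMaxOn_residual (hψ : ContDiff ℝ 2 ψ) (hσ : ∀ m, 0 < σ m)
    (hσ0 : Tendsto σ atTop (𝓝 0)) (hn : ∀ m, ContDiff ℝ 2 (n m))
    (hpos : ∀ m, ∀ x ∈ s, 0 < n m x)
    (heq : ∀ m, ∀ x ∈ s, -σ m * deriv (deriv (n m)) x - deriv (fun y => deriv ψ y * n m y) x
      + ν / σ m * n m x = μ / σ m * nb m x)
    (hconv : TendstoUniformlyOn (fun m x => -σ m * log (n m x)) R atTop s)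
    (hs : IsCompact s) (hsx₀ : s ∈ 𝓝 x₀) (hζ : IsTestSeq σ s Z x₀ p ζ ζ' ζ'')
    (hRZ : ∀ z ∈ s, R z - Z z + dist z x₀ ^ 2 ≤ R x₀ - Z x₀) :
    ∃ X : ℕ → ℝ, (∀ m, X m ∈ s ∧ IsMaxOn (fun x => -σ m * log (n m x) - ζ m x) s (X m)) ∧
      ∃ B : ℕ → ℝ, Tendsto B atTop (𝓝 (-fpBeta ψ ν p x₀)) ∧
        ∀ᶠ m in atTop, μ * nb m (X m) / n m (X m) ≤ B m := by
  have hcont : ∀ m, ContinuousOn (fun x => -σ m * log (n m x) - ζ m x) s := fun m =>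
    (continuousOn_const.mul ((hn m).continuous.continuousOn.log fun x hx => (hpos m x hx).ne')).sub
      (hζ.continuous m).continuousOn
  obtain ⟨X, hX, hXx₀⟩ := exists_isMaxOn_tendsto hs (mem_of_mem_nhds hsx₀) hcont
    (hconv.sub hζ.tendstoUniformlyOn) hRZ
  refine ⟨X, hX, _, hζ.tendsto_residual hσ0 hψ hXx₀, ?_⟩
  filter_upwards [hXx₀.eventually (eventually_mem_nhds_iff.2 hsx₀)] with m hm
  exact ratio_le_of_isLocalMax_phase_sub (hσ m) hψ (hn m) (hpos m _ (hX m).1) (heq m _ (hX m).1)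
    (hζ.hasDerivAt m) (hζ.hasDerivAt_deriv m) ((hX m).2.isLocalMax hm)

theorem exists_isMinOn_residual (hψ : ContDiff ℝ 2 ψ) (hσ : ∀ m, 0 < σ m)
    (hσ0 : Tendsto σ atTop (𝓝 0)) (hn : ∀ m, ContDiff ℝ 2 (n m))
    (hpos : ∀ m, ∀ x ∈ s, 0 < n m x)
    (heq : ∀ m, ∀ x ∈ s, -σ m * deriv (deriv (n m)) x - deriv (fun y => deriv ψ y * n m y) x
      + ν / σ m * n m x = μ / σ m * nb m x)
    (hconv : TendstoUniformlyOn (fun m x => -σ m * log (n m x)) R atTop s)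
    (hs : IsCompact s) (hsx₀ : s ∈ 𝓝 x₀) (hζ : IsTestSeq σ s Z x₀ p ζ ζ' ζ'')
    (hRZ : ∀ z ∈ s, R x₀ - Z x₀ + dist z x₀ ^ 2 ≤ R z - Z z) :
    ∃ X : ℕ → ℝ, (∀ m, X m ∈ s ∧ IsMinOn (fun x => -σ m * log (n m x) - ζ m x) s (X m)) ∧
      ∃ B : ℕ → ℝ, Tendsto B atTop (𝓝 (-fpBeta ψ ν p x₀)) ∧
        ∀ᶠ m in atTop, B m ≤ μ * nb m (X m) / n m (X m) := by
  have hcont : ∀ m, ContinuousOn (fun x => ζ m x - -σ m * log (n m x)) s := fun m =>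
    (hζ.continuous m).continuousOn.sub
      (continuousOn_const.mul ((hn m).continuous.continuousOn.log fun x hx => (hpos m x hx).ne'))
  obtain ⟨X, hX, hXx₀⟩ := exists_isMaxOn_tendsto hs (mem_of_mem_nhds hsx₀) hcont
    (hζ.tendstoUniformlyOn.sub hconv) fun z hz => by
      simp only [Pi.sub_apply]
      linarith [hRZ z hz]
  have hXmin : ∀ m, IsMinOn (fun x => -σ m * log (n m x) - ζ m x) s (X m) := fun m =>
    isMinOn_iff.2 fun x hx => by linarith [isMaxOn_iff.1 (hX m).2 x hx]
  refine ⟨X, fun m => ⟨(hX m).1, hXmin m⟩, _, hζ.tendsto_residual hσ0 hψ hXx₀, ?_⟩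
  filter_upwards [hXx₀.eventually (eventually_mem_nhds_iff.2 hsx₀)] with m hm
  exact le_ratio_of_isLocalMin_phase_sub (hσ m) hψ (hn m) (hpos m _ (hX m).1) (heq m _ (hX m).1)
    (hζ.hasDerivAt m) (hζ.hasDerivAt_deriv m) ((hXmin m).isLocalMin hm)

end Touching

section Cross

variable {s : Set ℝ} {n₁ n₂ w : ℝ → ℝ} {σ ν₁ ν₂ X₁ X₂ : ℝ}

/-- Adding the two maximality inequalities cancels the common test function. -/
theorem le_ratio_mul_ratio_of_isMaxOn (hσ : 0 < σ) (hν₁ : 0 < ν₁) (hν₂ : 0 < ν₂)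
    (hX₁ : X₁ ∈ s) (hX₂ : X₂ ∈ s) (hpos : ∀ x ∈ s, 0 < n₁ x ∧ 0 < n₂ x)
    (h₁ : IsMaxOn (fun x => -σ * log (n₁ x) - w x) s X₁)
    (h₂ : IsMaxOn (fun x => -σ * log (n₂ x) - w x) s X₂) :
    ν₁ * ν₂ ≤ ν₂ * n₂ X₁ / n₁ X₁ * (ν₁ * n₁ X₂ / n₂ X₂) := by
  obtain ⟨p₁₁, p₂₁⟩ := hpos X₁ hX₁
  obtain ⟨p₁₂, p₂₂⟩ := hpos X₂ hX₂
  have hlog : log (n₁ X₁ * n₂ X₂) ≤ log (n₁ X₂ * n₂ X₁) := by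
    rw [log_mul p₁₁.ne' p₂₂.ne', log_mul p₁₂.ne' p₂₁.ne']
    refine le_of_mul_le_mul_left ?_ hσ
    linarith [isMaxOn_iff.mp h₁ X₂ hX₂, isMaxOn_iff.mp h₂ X₁ hX₁]
  have hn := (log_le_log_iff (by positivity) (by positivity)).mp hlog
  rw [div_mul_div_comm, le_div_iff₀ (by positivity)]
  nlinarith [mul_le_mul_of_nonneg_left hn (mul_pos hν₁ hν₂).le]

theorem ratio_mul_ratio_le_of_isMinOn (hσ : 0 < σ) (hν₁ : 0 < ν₁) (hν₂ : 0 < ν₂)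
    (hX₁ : X₁ ∈ s) (hX₂ : X₂ ∈ s) (hpos : ∀ x ∈ s, 0 < n₁ x ∧ 0 < n₂ x)
    (h₁ : IsMinOn (fun x => -σ * log (n₁ x) - w x) s X₁)
    (h₂ : IsMinOn (fun x => -σ * log (n₂ x) - w x) s X₂) :
    ν₂ * n₂ X₁ / n₁ X₁ * (ν₁ * n₁ X₂ / n₂ X₂) ≤ ν₁ * ν₂ := by
  obtain ⟨p₁₁, p₂₁⟩ := hpos X₁ hX₁
  obtain ⟨p₁₂, p₂₂⟩ := hpos X₂ hX₂
  have hlog : log (n₁ X₂ * n₂ X₁) ≤ log (n₁ X₁ * n₂ X₂) := by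
    rw [log_mul p₁₁.ne' p₂₂.ne', log_mul p₁₂.ne' p₂₁.ne']
    refine le_of_mul_le_mul_left ?_ hσ
    linarith [isMinOn_iff.mp h₁ X₂ hX₂, isMinOn_iff.mp h₂ X₁ hX₁]
  have hn := (log_le_log_iff (by positivity) (by positivity)).mp hlog
  rw [div_mul_div_comm, div_le_iff₀ (by positivity)]
  nlinarith [mul_le_mul_of_nonneg_left hn (mul_pos hν₁ hν₂).le]

end Cross

section Limits

variable {q₁ q₂ B₁ B₂ : ℕ → ℝ} {L₁ L₂ c : ℝ}

theorem nonneg_and_le_mul_of_tendsto (hB₁ : Tendsto B₁ atTop (𝓝 L₁))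
    (hB₂ : Tendsto B₂ atTop (𝓝 L₂)) (hq₁ : ∀ m, 0 ≤ q₁ m) (hq₂ : ∀ m, 0 ≤ q₂ m)
    (h₁ : ∀ᶠ m in atTop, q₁ m ≤ B₁ m) (h₂ : ∀ᶠ m in atTop, q₂ m ≤ B₂ m)
    (hc : ∀ m, c ≤ q₁ m * q₂ m) : 0 ≤ L₁ ∧ 0 ≤ L₂ ∧ c ≤ L₁ * L₂ :=
  ⟨ge_of_tendsto hB₁ (h₁.mono fun m h => (hq₁ m).trans h),
    ge_of_tendsto hB₂ (h₂.mono fun m h => (hq₂ m).trans h),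
    ge_of_tendsto (hB₁.mul hB₂) ((h₁.and h₂).mono fun m h =>
      (hc m).trans (mul_le_mul h.1 h.2 (hq₂ m) ((hq₁ m).trans h.1)))⟩

theorem max_mul_max_le_of_tendsto (hB₁ : Tendsto B₁ atTop (𝓝 L₁))
    (hB₂ : Tendsto B₂ atTop (𝓝 L₂)) (hq₁ : ∀ m, 0 ≤ q₁ m) (hq₂ : ∀ m, 0 ≤ q₂ m)
    (h₁ : ∀ᶠ m in atTop, B₁ m ≤ q₁ m) (h₂ : ∀ᶠ m in atTop, B₂ m ≤ q₂ m)
    (hc : ∀ m, q₁ m * q₂ m ≤ c) : max L₁ 0 * max L₂ 0 ≤ c :=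
  le_of_tendsto ((hB₁.max tendsto_const_nhds).mul (hB₂.max tendsto_const_nhds))
    ((h₁.and h₂).mono fun m h => (mul_le_mul (max_le h.1 (hq₁ m)) (max_le h.2 (hq₂ m))
      (le_max_right _ _) (hq₁ m)).trans (hc m))

end Limits

/-- The larger eigenvalue of a 2×2 matrix with diagonal `b₁, b₂` and off-diagonal entries
of product `c`. -/
noncomputable def largerEigenvalue (b₁ b₂ c : ℝ) : ℝ :=
  1 / 2 * (b₁ + b₂ + √((b₁ + b₂) ^ 2 - 4 * (b₁ * b₂ - c)))

theorem largerEigenvalue_nonpos {b₁ b₂ c : ℝ} (h₁ : b₁ ≤ 0) (h₂ : b₂ ≤ 0) (hc : c ≤ b₁ * b₂) :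
    largerEigenvalue b₁ b₂ c ≤ 0 := by
  have : √((b₁ + b₂) ^ 2 - 4 * (b₁ * b₂ - c)) ≤ -(b₁ + b₂) :=
    calc √((b₁ + b₂) ^ 2 - 4 * (b₁ * b₂ - c)) ≤ √((b₁ + b₂) ^ 2) :=
          Real.sqrt_le_sqrt (by linarith)
      _ = -(b₁ + b₂) := by rw [Real.sqrt_sq_eq_abs, abs_of_nonpos (by linarith)]
  unfold largerEigenvalue
  linarith

theorem largerEigenvalue_nonneg {b₁ b₂ c : ℝ} (hc : 0 ≤ c)
    (h : max (-b₁) 0 * max (-b₂) 0 ≤ c) : 0 ≤ largerEigenvalue b₁ b₂ c := by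
  have hdet : 0 ≤ b₁ + b₂ ∨ b₁ * b₂ ≤ c := by
    rcases le_total 0 b₁ with h₁ | h₁ <;> rcases le_total 0 b₂ with h₂ | h₂
    · exact .inl (by linarith)
    · exact .inr (by nlinarith)
    · exact .inr (by nlinarith)
    · rw [max_eq_left (by linarith), max_eq_left (by linarith)] at h
      exact .inr (by linarith)
  unfold largerEigenvalue
  rcases hdet with hs | hd
  · positivity
  · have : -(b₁ + b₂) ≤ √((b₁ + b₂) ^ 2 - 4 * (b₁ * b₂ - c)) :=
      calc -(b₁ + b₂) ≤ |b₁ + b₂| := neg_le_abs _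
        _ = √((b₁ + b₂) ^ 2) := (Real.sqrt_sq_eq_abs _).symm
        _ ≤ √((b₁ + b₂) ^ 2 - 4 * (b₁ * b₂ - c)) := Real.sqrt_le_sqrt (by linarith)
    linarith

section FP2

variable {ψ₁ ψ₂ : ℝ → ℝ} {ν₁ ν₂ : ℝ} {σ : ℕ → ℝ} {n₁ n₂ : ℕ → ℝ → ℝ} {R Φ : ℝ → ℝ} {x₀ : ℝ}

theorem largerEigenvalue_fpBeta_nonpos_of_isLocalMax (hψ₁ : ContDiff ℝ 2 ψ₁)
    (hψ₂ : ContDiff ℝ 2 ψ₂) (hν₁ : 0 < ν₁) (hν₂ : 0 < ν₂) (hσ : ∀ m, 0 < σ m)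
    (hσ0 : Tendsto σ atTop (𝓝 0)) (hn : ∀ m, IsFPSolution2 ψ₁ ψ₂ ν₁ ν₂ (σ m) (n₁ m) (n₂ m))
    (hconv₁ : TendstoUniformlyOn (fun m x => -σ m * log (n₁ m x)) R atTop (Icc 0 1))
    (hconv₂ : TendstoUniformlyOn (fun m x => -σ m * log (n₂ m x)) R atTop (Icc 0 1))
    (hΦ : ∀ x ∈ Ioo (0 : ℝ) 1, DifferentiableAt ℝ Φ x) (hΦ' : ContinuousOn (deriv Φ) (Ioo 0 1))
    (hx₀ : x₀ ∈ Ioo (0 : ℝ) 1) (hmax : IsLocalMax (fun x => R x - Φ x) x₀) :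
    largerEigenvalue (fpBeta ψ₁ ν₁ (deriv Φ x₀) x₀) (fpBeta ψ₂ ν₂ (deriv Φ x₀) x₀) (ν₁ * ν₂)
      ≤ 0 := by
  obtain ⟨s, hs, hsx₀, hs01, hRΦ, ζ, ζ', ζ'', hζ⟩ := exists_nhds_isTestSeq hmax hx₀ hΦ hΦ' hσ hσ0
  simp only [IsFPSolution2, forall_and] at hn
  obtain ⟨hc₁, hc₂, ⟨hpos₁, hpos₂⟩, heq₁, heq₂, -⟩ := hn
  have hs' := hs01.trans Ioo_subset_Icc_self
  have hpos' : ∀ m, ∀ x ∈ s, 0 < n₁ m x ∧ 0 < n₂ m x := fun m x hx =>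
    ⟨hpos₁ m x (hs' hx), hpos₂ m x (hs' hx)⟩
  have hpen := hζ.add_sq hσ0 1
  have hRZ : ∀ z ∈ s, R z - (Φ z + 1 * (z - x₀) ^ 2) + dist z x₀ ^ 2
      ≤ R x₀ - (Φ x₀ + 1 * (x₀ - x₀) ^ 2) := fun z hz => by
    rw [Real.dist_eq, sq_abs]
    linarith [hRΦ z hz]
  obtain ⟨X₁, hX₁, B₁, hB₁, hq₁⟩ := exists_isMaxOn_residual hψ₁ hσ hσ0 hc₁
    (fun m x hx => (hpos' m x hx).1) (fun m x hx => heq₁ m x (hs01 hx)) (hconv₁.mono hs') hs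
    hsx₀ hpen hRZ
  obtain ⟨X₂, hX₂, B₂, hB₂, hq₂⟩ := exists_isMaxOn_residual hψ₂ hσ hσ0 hc₂
    (fun m x hx => (hpos' m x hx).2) (fun m x hx => heq₂ m x (hs01 hx)) (hconv₂.mono hs') hs
    hsx₀ hpen hRZ
  obtain ⟨h₁, h₂, h₁₂⟩ := nonneg_and_le_mul_of_tendsto hB₁ hB₂
    (fun m => have h := hpos' m _ (hX₁ m).1; (div_pos (mul_pos hν₂ h.2) h.1).le)
    (fun m => have h := hpos' m _ (hX₂ m).1; (div_pos (mul_pos hν₁ h.1) h.2).le) hq₁ hq₂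
    fun m => le_ratio_mul_ratio_of_isMaxOn (hσ m) hν₁ hν₂ (hX₁ m).1 (hX₂ m).1 (hpos' m)
      (hX₁ m).2 (hX₂ m).2
  rw [neg_mul_neg] at h₁₂
  exact largerEigenvalue_nonpos (by linarith) (by linarith) h₁₂

theorem largerEigenvalue_fpBeta_nonneg_of_isLocalMin (hψ₁ : ContDiff ℝ 2 ψ₁)
    (hψ₂ : ContDiff ℝ 2 ψ₂) (hν₁ : 0 < ν₁) (hν₂ : 0 < ν₂) (hσ : ∀ m, 0 < σ m)
    (hσ0 : Tendsto σ atTop (𝓝 0)) (hn : ∀ m, IsFPSolution2 ψ₁ ψ₂ ν₁ ν₂ (σ m) (n₁ m) (n₂ m))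
    (hconv₁ : TendstoUniformlyOn (fun m x => -σ m * log (n₁ m x)) R atTop (Icc 0 1))
    (hconv₂ : TendstoUniformlyOn (fun m x => -σ m * log (n₂ m x)) R atTop (Icc 0 1))
    (hΦ : ∀ x ∈ Ioo (0 : ℝ) 1, DifferentiableAt ℝ Φ x) (hΦ' : ContinuousOn (deriv Φ) (Ioo 0 1))
    (hx₀ : x₀ ∈ Ioo (0 : ℝ) 1) (hmin : IsLocalMin (fun x => R x - Φ x) x₀) :
    0 ≤ largerEigenvalue (fpBeta ψ₁ ν₁ (deriv Φ x₀) x₀) (fpBeta ψ₂ ν₂ (deriv Φ x₀) x₀)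
      (ν₁ * ν₂) := by
  obtain ⟨s, hs, hsx₀, hs01, hRΦ, ζ, ζ', ζ'', hζ⟩ := exists_nhds_isTestSeq hmin hx₀ hΦ hΦ' hσ hσ0
  simp only [IsFPSolution2, forall_and] at hn
  obtain ⟨hc₁, hc₂, ⟨hpos₁, hpos₂⟩, heq₁, heq₂, -⟩ := hn
  have hs' := hs01.trans Ioo_subset_Icc_self
  have hpos' : ∀ m, ∀ x ∈ s, 0 < n₁ m x ∧ 0 < n₂ m x := fun m x hx =>
    ⟨hpos₁ m x (hs' hx), hpos₂ m x (hs' hx)⟩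
  have hpen := hζ.add_sq hσ0 (-1)
  have hRZ : ∀ z ∈ s, R x₀ - (Φ x₀ + -1 * (x₀ - x₀) ^ 2) + dist z x₀ ^ 2
      ≤ R z - (Φ z + -1 * (z - x₀) ^ 2) := fun z hz => by
    rw [Real.dist_eq, sq_abs]
    linarith [hRΦ z hz]
  obtain ⟨X₁, hX₁, B₁, hB₁, hq₁⟩ := exists_isMinOn_residual hψ₁ hσ hσ0 hc₁
    (fun m x hx => (hpos' m x hx).1) (fun m x hx => heq₁ m x (hs01 hx)) (hconv₁.mono hs') hs
    hsx₀ hpen hRZ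
  obtain ⟨X₂, hX₂, B₂, hB₂, hq₂⟩ := exists_isMinOn_residual hψ₂ hσ hσ0 hc₂
    (fun m x hx => (hpos' m x hx).2) (fun m x hx => heq₂ m x (hs01 hx)) (hconv₂.mono hs') hs
    hsx₀ hpen hRZ
  exact largerEigenvalue_nonneg (mul_pos hν₁ hν₂).le <| max_mul_max_le_of_tendsto hB₁ hB₂
    (fun m => have h := hpos' m _ (hX₁ m).1; (div_pos (mul_pos hν₂ h.2) h.1).le)
    (fun m => have h := hpos' m _ (hX₂ m).1; (div_pos (mul_pos hν₁ h.1) h.2).le) hq₁ hq₂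
    fun m => ratio_mul_ratio_le_of_isMinOn (hσ m) hν₁ hν₂ (hX₁ m).1 (hX₂ m).1 (hpos' m)
      (hX₁ m).2 (hX₂ m).2

end FP2

theorem fp2_effective_hamiltonian_general (ψ₁ ψ₂ : ℝ → ℝ) (ν₁ ν₂ k : ℝ)
    (hψ₁ : ContDiff ℝ 2 ψ₁) (hψ₂ : ContDiff ℝ 2 ψ₂)
    (hk : 0 < k) (hν₁ : k ≤ ν₁) (hν₂ : k ≤ ν₂)
    (σs : ℕ → ℝ) (hσs : ∀ m, 0 < σs m) (hσs0 : Tendsto σs atTop (nhds 0))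
    (n₁ n₂ : ℕ → ℝ → ℝ)
    (hn : ∀ m, IsFPSolution2 ψ₁ ψ₂ ν₁ ν₂ (σs m) (n₁ m) (n₂ m))
    (R : ℝ → ℝ)
    (hconv₁ : TendstoUniformlyOn (fun m x => -(σs m) * Real.log (n₁ m x)) R atTop
      (Set.Icc 0 1))
    (hconv₂ : TendstoUniformlyOn (fun m x => -(σs m) * Real.log (n₂ m x)) R atTop
      (Set.Icc 0 1)) :
    ∀ H : ℝ → ℝ → ℝ,
      H = (fun p x =>
        (1 / 2) * ((p ^ 2 - deriv ψ₁ x * p - ν₁) + (p ^ 2 - deriv ψ₂ x * p - ν₂)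
          + Real.sqrt (((p ^ 2 - deriv ψ₁ x * p - ν₁)
                + (p ^ 2 - deriv ψ₂ x * p - ν₂)) ^ 2
              - 4 * ((p ^ 2 - deriv ψ₁ x * p - ν₁) * (p ^ 2 - deriv ψ₂ x * p - ν₂)
                - ν₁ * ν₂)))) →
      ∀ Φ : ℝ → ℝ, (∀ x ∈ Set.Ioo (0:ℝ) 1, DifferentiableAt ℝ Φ x) →
        ContinuousOn (deriv Φ) (Set.Ioo 0 1) →
        ∀ x₀ ∈ Set.Ioo (0:ℝ) 1,
          (IsLocalMax (fun x => R x - Φ x) x₀ → H (deriv Φ x₀) x₀ ≤ 0) ∧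
          (IsLocalMin (fun x => R x - Φ x) x₀ → 0 ≤ H (deriv Φ x₀) x₀) := by
  intro H hH Φ hΦ hΦ' x₀ hx₀
  subst hH
  have hν₁0 : 0 < ν₁ := hk.trans_le hν₁
  have hν₂0 : 0 < ν₂ := hk.trans_le hν₂
  exact ⟨largerEigenvalue_fpBeta_nonpos_of_isLocalMax hψ₁ hψ₂ hν₁0 hν₂0 hσs hσs0 hn hconv₁
      hconv₂ hΦ hΦ' hx₀,
    largerEigenvalue_fpBeta_nonneg_of_isLocalMin hψ₁ hψ₂ hν₁0 hν₂0 hσs hσs0 hn hconv₁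
      hconv₂ hΦ hΦ' hx₀⟩

/-- Lemma 3.2 (effective Hamiltonian): the uniform limit `R` of the phase functions
is a viscosity solution of `H(R', x) = 0` in `(0,1)`, where
`H(p,x) = (1/2)[β₁+β₂+√((β₁+β₂)² − 4(β₁β₂ − ν₁ν₂))]`, `βᵢ = p² − ψᵢ' p − νᵢ`. -/
theorem fp2_effective_hamiltonian (ψ₁ ψ₂ : ℝ → ℝ) (ν₁ ν₂ k : ℝ)
    (hψ₁ : ContDiff ℝ 2 ψ₁) (hψ₂ : ContDiff ℝ 2 ψ₂)
    (hψL₁ : ∃ L : NNReal, LipschitzOnWith L (deriv (deriv ψ₁)) (Set.Icc 0 1))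
    (hψL₂ : ∃ L : NNReal, LipschitzOnWith L (deriv (deriv ψ₂)) (Set.Icc 0 1))
    (hk : 0 < k) (hν₁ : k ≤ ν₁) (hν₂ : k ≤ ν₂)
    -- (H2)
    (M : ℕ) (a b : Fin M → ℝ)
    (hJ : ∀ l, a l < b l ∧ 0 ≤ a l ∧ b l ≤ 1)
    (hH2 : ∀ x ∈ ⋃ l, Set.Ioo (a l) (b l), 0 < min (deriv ψ₁ x) (deriv ψ₂ x))
    -- (H3)
    (hH3 : ∀ x ∈ Set.Icc (0:ℝ) 1, 0 < max (deriv ψ₁ x) (deriv ψ₂ x))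
    (σs : ℕ → ℝ) (hσs : ∀ m, 0 < σs m) (hσs0 : Tendsto σs atTop (nhds 0))
    (n₁ n₂ : ℕ → ℝ → ℝ)
    (hn : ∀ m, IsFPSolution2 ψ₁ ψ₂ ν₁ ν₂ (σs m) (n₁ m) (n₂ m))
    (R : ℝ → ℝ) (hR : ContinuousOn R (Set.Icc 0 1))
    (hconv₁ : TendstoUniformlyOn (fun m x => -(σs m) * Real.log (n₁ m x)) R atTop
      (Set.Icc 0 1))
    (hconv₂ : TendstoUniformlyOn (fun m x => -(σs m) * Real.log (n₂ m x)) R atTop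
      (Set.Icc 0 1)) :
    ∀ H : ℝ → ℝ → ℝ,
      H = (fun p x =>
        (1 / 2) * ((p ^ 2 - deriv ψ₁ x * p - ν₁) + (p ^ 2 - deriv ψ₂ x * p - ν₂)
          + Real.sqrt (((p ^ 2 - deriv ψ₁ x * p - ν₁)
                + (p ^ 2 - deriv ψ₂ x * p - ν₂)) ^ 2
              - 4 * ((p ^ 2 - deriv ψ₁ x * p - ν₁) * (p ^ 2 - deriv ψ₂ x * p - ν₂)
                - ν₁ * ν₂)))) →
      ∀ Φ : ℝ → ℝ, (∀ x ∈ Set.Ioo (0:ℝ) 1, DifferentiableAt ℝ Φ x) →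
        ContinuousOn (deriv Φ) (Set.Ioo 0 1) →
        ∀ x₀ ∈ Set.Ioo (0:ℝ) 1,
          (IsLocalMax (fun x => R x - Φ x) x₀ → H (deriv Φ x₀) x₀ ≤ 0) ∧
          (IsLocalMin (fun x => R x - Φ x) x₀ → 0 ≤ H (deriv Φ x₀) x₀) :=
  fp2_effective_hamiltonian_general ψ₁ ψ₂ ν₁ ν₂ k hψ₁ hψ₂ hk hν₁ hν₂ σs hσs hσs0 n₁ n₂ hn R hconv₁
    hconv₂
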